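/- arXiv:2307.02510 — 2 statements merged into one kernel-verified Lean document; each statement's English description precedes it below -/
import Mathlib

section
/- If limsup_{t→∞} max_{i ∈ L} α_i(t) < 1, then lim_{t→∞} max_{i ∈ L} ‖x_i(t) − g‖ = 0, i.e., all leader-group agents converge to the target opinion g. -/
open Filter

private lemma biSup_eq_sup' {ι : Type*} [Fintype ι] (L : Finset ι) (hL : L.Nonempty)
    (f : ι → ℝ) (hf : ∀ i ∈ L, 0 ≤ f i) : (⨆ i ∈ L, f i) = L.sup' hL f := by
  obtain ⟨j, hj⟩ := hL
  have h0 : 0 ≤ L.sup' ⟨j, hj⟩ f := le_trans (hf j hj) (Finset.le_sup' f hj)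
  apply le_antisymm
  · exact Real.iSup_le (fun i => Real.iSup_le (fun hi => Finset.le_sup' f hi) h0) h0
  · refine Finset.sup'_le _ _ (fun i hi => ?_)
    have h1 : f i ≤ ⨆ (_ : i ∈ L), f i :=
      le_ciSup (f := fun _ : i ∈ L => f i) (Set.finite_range _).bddAbove hi
    exact h1.trans (le_ciSup (f := fun i => ⨆ (_ : i ∈ L), f i) (Set.finite_range _).bddAbove i)

/-- if `limsup_{t→∞} max_{i∈L} α_i(t) < 1` then
`max_{i∈L} ‖x_i(t) − g‖ → 0`, i.e. all leaders converge to the target. -/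
theorem stmt_2 {d : ℕ} {ι : Type*} [Fintype ι] [DecidableEq ι]
    (L : Finset ι) (hL : L.Nonempty)
    (x : ℕ → ι → EuclideanSpace ℝ (Fin d)) (g : EuclideanSpace ℝ (Fin d))
    (ε : ℝ) (hε : 0 < ε)
    (α : ℕ → ι → ℝ) (hα : ∀ t i, α t i ∈ Set.Icc (0 : ℝ) 1)
    (N : ℕ → ι → Finset ι)
    (hN : ∀ t i, N t i = L.filter (fun j => ‖x t j - x t i‖ ≤ ε))
    (hupd : ∀ t, ∀ i ∈ L, x (t + 1) i =
      (α t i / (N t i).card) • ∑ j ∈ N t i, x t j + (1 - α t i) • g)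
    (hlimsup : Filter.limsup (fun t => ⨆ i ∈ L, α t i) atTop < 1) :
    Tendsto (fun t => ⨆ i ∈ L, ‖x t i - g‖) atTop (nhds 0) := by
  set M : ℕ → ℝ := fun t => L.sup' hL (fun i => ‖x t i - g‖) with hMdef
  have hMeq : (fun t => ⨆ i ∈ L, ‖x t i - g‖) = M := by
    funext t
    exact biSup_eq_sup' L hL _ (fun i _ => norm_nonneg _)
  rw [hMeq]
  have hM0 : ∀ t, 0 ≤ M t := by
    intro t
    obtain ⟨j, hj⟩ := id hL
    exact le_trans (norm_nonneg _) (Finset.le_sup' (fun i => ‖x t i - g‖) hj)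
  -- a uniform eventual bound q < 1 on the α's
  have hbdd : IsBoundedUnder (· ≤ ·) atTop (fun t => ⨆ i ∈ L, α t i) := by
    refine ⟨1, Filter.eventually_map.2 (Filter.Eventually.of_forall (fun t => ?_))⟩
    rw [biSup_eq_sup' L hL _ (fun i hi => (hα t i).1)]
    exact Finset.sup'_le _ _ (fun i hi => (hα t i).2)
  have hev : ∀ᶠ t in atTop, (fun t => ⨆ i ∈ L, α t i) t < 1 :=
    eventually_lt_of_limsup_lt hlimsup hbdd
  obtain ⟨q, hq1, hq⟩ : ∃ q < 1, ∀ᶠ t in atTop, (⨆ i ∈ L, α t i) ≤ q := by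
    refine ⟨max 0 (limsup (fun t => ⨆ i ∈ L, α t i) atTop + 1) / 2, ?_, ?_⟩
    · have : max 0 (limsup (fun t => ⨆ i ∈ L, α t i) atTop + 1) < 2 := by
        apply max_lt (by norm_num)
        linarith
      linarith
    · have hlt : limsup (fun t => ⨆ i ∈ L, α t i) atTop
          < max 0 (limsup (fun t => ⨆ i ∈ L, α t i) atTop + 1) / 2 := by
        have h1 := le_max_right (0:ℝ) (limsup (fun t => ⨆ i ∈ L, α t i) atTop + 1)
        by_cases h : limsup (fun t => ⨆ i ∈ L, α t i) atTop + 1 ≤ 0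
        · have h2 := le_max_left (0:ℝ) (limsup (fun t => ⨆ i ∈ L, α t i) atTop + 1)
          linarith
        · linarith
      exact (eventually_lt_of_limsup_lt hlt hbdd).mono (fun t ht => le_of_lt ht)
  have hq0 : 0 ≤ q := by
    obtain ⟨t0, ht0⟩ := hq.exists
    obtain ⟨j, hj⟩ := id hL
    have h1 : α t0 j ≤ ⨆ i ∈ L, α t0 i := by
      rw [biSup_eq_sup' L hL _ (fun i _ => (hα t0 i).1)]
      exact Finset.le_sup' _ hj
    exact le_trans (le_trans (hα t0 j).1 h1) ht0
  obtain ⟨T, hT⟩ := eventually_atTop.1 hq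
  -- the key contraction step
  have hstep : ∀ t, T ≤ t → M (t + 1) ≤ q * M t := by
    intro t ht
    refine Finset.sup'_le _ _ (fun i hi => ?_)
    have hiN : i ∈ N t i := by
      rw [hN]
      exact Finset.mem_filter.2 ⟨hi, by simp [hε.le]⟩
    have hcpos : 0 < (N t i).card := Finset.card_pos.2 ⟨i, hiN⟩
    have hc : ((N t i).card : ℝ) ≠ 0 := Nat.cast_ne_zero.2 hcpos.ne'
    have hsum : ∑ j ∈ N t i, (x t j - g)
        = (∑ j ∈ N t i, x t j) - ((N t i).card : ℝ) • g := by
      rw [Finset.sum_sub_distrib, Finset.sum_const]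
      congr 1
      exact (Nat.cast_smul_eq_nsmul ℝ _ _).symm
    have key : x (t + 1) i - g
        = (α t i / (N t i).card) • ∑ j ∈ N t i, (x t j - g) := by
      rw [hupd t i hi, hsum, smul_sub, smul_smul, div_mul_cancel₀ _ hc]
      module
    have hα0 : 0 ≤ α t i := (hα t i).1
    have hnormsum : ‖∑ j ∈ N t i, (x t j - g)‖ ≤ ((N t i).card : ℝ) * M t := by
      refine le_trans (norm_sum_le _ _) ?_
      have := Finset.sum_le_card_nsmul (N t i) (fun j => ‖x t j - g‖) (M t)
        (fun j hj => by
          have hjL : j ∈ L := by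
            rw [hN] at hj
            exact (Finset.mem_filter.1 hj).1
          exact Finset.le_sup' (fun j => ‖x t j - g‖) hjL)
      simpa [nsmul_eq_mul] using this
    have hαq : α t i ≤ q := by
      have h1 : α t i ≤ ⨆ i ∈ L, α t i := by
        rw [biSup_eq_sup' L hL _ (fun i _ => (hα t i).1)]
        exact Finset.le_sup' _ hi
      exact le_trans h1 (hT t ht)
    calc ‖x (t + 1) i - g‖
        = (α t i / (N t i).card) * ‖∑ j ∈ N t i, (x t j - g)‖ := by
          rw [key, norm_smul, Real.norm_of_nonneg (div_nonneg hα0 (Nat.cast_nonneg _))]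
      _ ≤ (α t i / (N t i).card) * (((N t i).card : ℝ) * M t) := by
          exact mul_le_mul_of_nonneg_left hnormsum (div_nonneg hα0 (Nat.cast_nonneg _))
      _ = α t i * M t := by field_simp
      _ ≤ q * M t := mul_le_mul_of_nonneg_right hαq (hM0 t)
  have hgeo : ∀ n, M (T + n) ≤ q ^ n * M T := by
    intro n
    induction n with
    | zero => simp
    | succ n ih =>
        have h1 : M (T + n + 1) ≤ q * M (T + n) := hstep (T + n) (Nat.le_add_right _ _)
        calc M (T + (n + 1)) = M (T + n + 1) := by ring_nf
          _ ≤ q * M (T + n) := h1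
          _ ≤ q * (q ^ n * M T) := mul_le_mul_of_nonneg_left ih hq0
          _ = q ^ (n + 1) * M T := by ring
  rw [← tendsto_add_atTop_iff_nat T]
  have hgeo' : ∀ n, M (n + T) ≤ q ^ n * M T := fun n => by
    rw [Nat.add_comm]; exact hgeo n
  refine squeeze_zero (fun n => hM0 _) hgeo' ?_
  simpa using (tendsto_pow_atTop_nhds_zero_of_lt_one hq0 hq1).mul_const (M T)
end

section
/- Suppose at some time t all opinions of agents in L ∪ F lie in the open ball B(g, ε), and sup_{s ≥ t} max{ max_{i∈F}(1 − β_i(s)), max_{i∈L} α_i(s) } < 1. Then lim_{t→∞} max_{i ∈ L ∪ F} ‖x_i(t) − g‖ = 0, i.e., all agents (leaders and followers) reach consensus at the target g. -/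
open Filter

private lemma avg_bound {d : ℕ} {ι : Type*} (s : Finset ι) (hs : s.Nonempty)
    (y : ι → EuclideanSpace ℝ (Fin d)) (g : EuclideanSpace ℝ (Fin d)) {a M : ℝ}
    (ha : 0 ≤ a) (hM : ∀ j ∈ s, ‖y j - g‖ ≤ M) :
    ‖(a / s.card) • ∑ j ∈ s, y j - a • g‖ ≤ a * M := by
  have hn : (0:ℝ) < s.card := by exact_mod_cast Finset.card_pos.2 hs
  have hcard : ((s.card : ℝ)) ≠ 0 := ne_of_gt hn
  have key : (a / s.card) • ∑ j ∈ s, y j - a • g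
      = (a / s.card) • ∑ j ∈ s, (y j - g) := by
    rw [Finset.sum_sub_distrib, smul_sub]
    congr 1
    rw [Finset.sum_const, ← Nat.cast_smul_eq_nsmul ℝ, smul_smul]
    congr 1
    field_simp
  rw [key]
  calc ‖(a / s.card) • ∑ j ∈ s, (y j - g)‖
      = (a / s.card) * ‖∑ j ∈ s, (y j - g)‖ := by
        rw [norm_smul, Real.norm_of_nonneg (by positivity)]
    _ ≤ (a / s.card) * ∑ j ∈ s, ‖y j - g‖ := by
        exact mul_le_mul_of_nonneg_left (norm_sum_le _ _) (by positivity)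
    _ ≤ (a / s.card) * (s.card * M) := by
        refine mul_le_mul_of_nonneg_left ?_ (by positivity)
        calc ∑ j ∈ s, ‖y j - g‖ ≤ ∑ _j ∈ s, M := Finset.sum_le_sum hM
          _ = s.card * M := by rw [Finset.sum_const, nsmul_eq_mul]
    _ = a * M := by field_simp

/-- if at some time `t₀` all opinions of `L ∪ F` lie in `B(g, ε)` and
`sup_{s ≥ t₀} max{max_{i∈F}(1 − β_i(s)), max_{i∈L} α_i(s)} < 1`, then
`max_{i ∈ L ∪ F} ‖x_i(t) − g‖ → 0`: all agents reach consensus at `g`. -/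
theorem stmt_7 {d : ℕ} {ι : Type*} [Fintype ι] [DecidableEq ι]
    (L F : Finset ι) (hL : L.Nonempty) (hF : F.Nonempty) (hLF : Disjoint L F)
    (x : ℕ → ι → EuclideanSpace ℝ (Fin d)) (g : EuclideanSpace ℝ (Fin d))
    (ε : ℝ) (hε : 0 < ε)
    (α β : ℕ → ι → ℝ)
    (hα : ∀ t i, α t i ∈ Set.Icc (0 : ℝ) 1) (hβ : ∀ t i, β t i ∈ Set.Icc (0 : ℝ) 1)
    (NL NF : ℕ → ι → Finset ι)
    (hNL : ∀ t i, NL t i = L.filter (fun j => ‖x t j - x t i‖ ≤ ε))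
    (hNF : ∀ t i, NF t i = F.filter (fun j => ‖x t j - x t i‖ ≤ ε))
    (hβ0 : ∀ t, ∀ i ∈ F, NL t i = ∅ → β t i = 0)
    (hupdL : ∀ t, ∀ i ∈ L, x (t + 1) i =
      (α t i / (NL t i).card) • ∑ j ∈ NL t i, x t j + (1 - α t i) • g)
    (hupdF : ∀ t, ∀ i ∈ F, x (t + 1) i =
      ((1 - β t i) / (NF t i).card) • ∑ j ∈ NF t i, x t j +
        (β t i / (NL t i).card) • ∑ j ∈ NL t i, x t j)
    (t₀ : ℕ) (hball : ∀ k ∈ L ∪ F, x t₀ k ∈ Metric.ball g ε)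
    (γ : ℝ) (hγ : γ < 1)
    (hsup : ∀ s ≥ t₀, (∀ i ∈ F, 1 - β s i ≤ γ) ∧ (∀ i ∈ L, α s i ≤ γ)) :
    Tendsto (fun t => ⨆ i ∈ L ∪ F, ‖x t i - g‖) atTop (nhds 0) := by
  obtain ⟨i₀, hi₀⟩ := hL
  obtain ⟨j₀, hj₀⟩ := hF
  have hLne : L.Nonempty := ⟨i₀, hi₀⟩
  have hFne : F.Nonempty := ⟨j₀, hj₀⟩
  set ML : ℕ → ℝ := fun t => L.sup' hLne (fun i => ‖x t i - g‖) with hMLdef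
  set MF : ℕ → ℝ := fun t => F.sup' hFne (fun i => ‖x t i - g‖) with hMFdef
  have hMLnn : ∀ t, 0 ≤ ML t := fun t =>
    le_trans (norm_nonneg _) (Finset.le_sup' (fun i => ‖x t i - g‖) hi₀)
  have hMFnn : ∀ t, 0 ≤ MF t := fun t =>
    le_trans (norm_nonneg _) (Finset.le_sup' (fun i => ‖x t i - g‖) hj₀)
  have hγ0 : 0 ≤ γ := le_trans (hα t₀ i₀).1 ((hsup t₀ le_rfl).2 i₀ hi₀)
  have h1γ : 0 < 1 - γ := by linarith
  set c : ℝ := 2 / (1 - γ) with hcdef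
  set ρ : ℝ := (1 + γ) / 2 with hρdef
  have hc0 : 0 < c := by positivity
  have hc1 : 1 ≤ c := by
    rw [hcdef, le_div_iff₀ h1γ]; linarith
  have hρ0 : 0 ≤ ρ := by positivity
  have hρ1 : ρ < 1 := by rw [hρdef]; linarith
  have hγρ : γ ≤ ρ := by rw [hρdef]; linarith
  have hcρ : 1 + c * γ = ρ * c := by
    rw [hcdef, hρdef]; field_simp; ring
  -- membership of i in its own leader/follower neighborhood
  have hmemL : ∀ t, ∀ i ∈ L, i ∈ NL t i := by
    intro t i hi
    rw [hNL t i, Finset.mem_filter]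
    exact ⟨hi, by simp [le_of_lt hε]⟩
  have hmemF : ∀ t, ∀ i ∈ F, i ∈ NF t i := by
    intro t i hi
    rw [hNF t i, Finset.mem_filter]
    exact ⟨hi, by simp [le_of_lt hε]⟩
  -- leader step
  have hMLstep : ∀ t ≥ t₀, ML (t + 1) ≤ γ * ML t := by
    intro t ht
    refine Finset.sup'_le _ _ (fun i hi => ?_)
    have hsub : NL t i ⊆ L := by rw [hNL t i]; exact Finset.filter_subset _ _
    have hdiff : x (t + 1) i - g
        = (α t i / (NL t i).card) • ∑ j ∈ NL t i, x t j - (α t i) • g := by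
      rw [hupdL t i hi, sub_smul, one_smul]; abel
    rw [hdiff]
    calc ‖(α t i / (NL t i).card) • ∑ j ∈ NL t i, x t j - (α t i) • g‖
        ≤ α t i * ML t := by
          refine avg_bound _ ⟨i, hmemL t i hi⟩ _ _ (hα t i).1 (fun j hj => ?_)
          exact Finset.le_sup' (fun k => ‖x t k - g‖) (hsub hj)
      _ ≤ γ * ML t := mul_le_mul_of_nonneg_right ((hsup t ht).2 i hi) (hMLnn t)
  -- follower step
  have hMFstep : ∀ t ≥ t₀, MF (t + 1) ≤ γ * MF t + ML t := by
    intro t ht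
    refine Finset.sup'_le _ _ (fun i hi => ?_)
    have hsubF : NF t i ⊆ F := by rw [hNF t i]; exact Finset.filter_subset _ _
    have hsubL : NL t i ⊆ L := by rw [hNL t i]; exact Finset.filter_subset _ _
    have hg : (1 - β t i) • g + (β t i) • g = g := by
      rw [← add_smul, sub_add_cancel, one_smul]
    have hdiff : x (t + 1) i - g
        = (((1 - β t i) / (NF t i).card) • ∑ j ∈ NF t i, x t j - (1 - β t i) • g)
          + ((β t i / (NL t i).card) • ∑ j ∈ NL t i, x t j - (β t i) • g) := by
      rw [hupdF t i hi]
      conv_lhs => rw [← hg]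
      abel
    have hT1 : ‖((1 - β t i) / (NF t i).card) • ∑ j ∈ NF t i, x t j
        - (1 - β t i) • g‖ ≤ (1 - β t i) * MF t := by
      refine avg_bound _ ⟨i, hmemF t i hi⟩ _ _ (by linarith [(hβ t i).2]) (fun j hj => ?_)
      exact Finset.le_sup' (fun k => ‖x t k - g‖) (hsubF hj)
    have hT2 : ‖(β t i / (NL t i).card) • ∑ j ∈ NL t i, x t j
        - (β t i) • g‖ ≤ β t i * ML t := by
      rcases Finset.eq_empty_or_nonempty (NL t i) with hemp | hne
      · have hb0 : β t i = 0 := hβ0 t i hi hemp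
        simp [hemp, hb0]
      · refine avg_bound _ hne _ _ (hβ t i).1 (fun j hj => ?_)
        exact Finset.le_sup' (fun k => ‖x t k - g‖) (hsubL hj)
    have hbound : ‖x (t + 1) i - g‖ ≤ (1 - β t i) * MF t + β t i * ML t := by
      rw [hdiff]; exact le_trans (norm_add_le _ _) (add_le_add hT1 hT2)
    have h1 : (1 - β t i) * MF t ≤ γ * MF t :=
      mul_le_mul_of_nonneg_right ((hsup t ht).1 i hi) (hMFnn t)
    have h2 : β t i * ML t ≤ 1 * ML t :=
      mul_le_mul_of_nonneg_right (hβ t i).2 (hMLnn t)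
    calc ‖x (t + 1) i - g‖ ≤ (1 - β t i) * MF t + β t i * ML t := hbound
      _ ≤ γ * MF t + ML t := by linarith
  -- Lyapunov decay
  have hV : ∀ n, MF (t₀ + n) + c * ML (t₀ + n) ≤ ρ ^ n * (MF t₀ + c * ML t₀) := by
    intro n
    induction n with
    | zero => simp
    | succ n ih =>
      have ht : t₀ ≤ t₀ + n := Nat.le_add_right _ _
      have h1 := hMLstep (t₀ + n) ht
      have h2 := hMFstep (t₀ + n) ht
      have h3 : c * ML (t₀ + n + 1) ≤ c * (γ * ML (t₀ + n)) :=
        mul_le_mul_of_nonneg_left h1 (le_of_lt hc0)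
      have h4 : γ * MF (t₀ + n) ≤ ρ * MF (t₀ + n) :=
        mul_le_mul_of_nonneg_right hγρ (hMFnn _)
      have key : MF (t₀ + n + 1) + c * ML (t₀ + n + 1)
          ≤ ρ * (MF (t₀ + n) + c * ML (t₀ + n)) := by
        have h5 : (1 + c * γ) * ML (t₀ + n) = ρ * c * ML (t₀ + n) := by rw [hcρ]
        nlinarith [hMLnn (t₀ + n)]
      have hVnn : 0 ≤ MF t₀ + c * ML t₀ :=
        add_nonneg (hMFnn _) (mul_nonneg (le_of_lt hc0) (hMLnn _))
      calc MF (t₀ + (n + 1)) + c * ML (t₀ + (n + 1))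
          = MF (t₀ + n + 1) + c * ML (t₀ + n + 1) := by ring_nf
        _ ≤ ρ * (MF (t₀ + n) + c * ML (t₀ + n)) := key
        _ ≤ ρ * (ρ ^ n * (MF t₀ + c * ML t₀)) := mul_le_mul_of_nonneg_left ih hρ0
        _ = ρ ^ (n + 1) * (MF t₀ + c * ML t₀) := by ring
  -- the sup is squeezed between 0 and the Lyapunov function
  have hsupnn : ∀ t, (0:ℝ) ≤ ⨆ i ∈ L ∪ F, ‖x t i - g‖ := by
    intro t
    exact Real.iSup_nonneg fun i => Real.iSup_nonneg fun _ => norm_nonneg _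
  have hsuple : ∀ t, (⨆ i ∈ L ∪ F, ‖x t i - g‖) ≤ MF t + c * ML t := by
    intro t
    have hVnn : 0 ≤ MF t + c * ML t :=
      add_nonneg (hMFnn _) (mul_nonneg (le_of_lt hc0) (hMLnn _))
    refine Real.iSup_le (fun i => Real.iSup_le (fun hi => ?_) hVnn) hVnn
    rcases Finset.mem_union.1 hi with h | h
    · have h1 : ‖x t i - g‖ ≤ ML t := Finset.le_sup' (fun k => ‖x t k - g‖) h
      have h2 : ML t ≤ c * ML t := le_mul_of_one_le_left (hMLnn t) hc1
      linarith [hMFnn t]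
    · have h1 : ‖x t i - g‖ ≤ MF t := Finset.le_sup' (fun k => ‖x t k - g‖) h
      nlinarith [hMLnn t, le_of_lt hc0]
  rw [← tendsto_add_atTop_iff_nat t₀]
  have hVnn0 : 0 ≤ MF t₀ + c * ML t₀ :=
    add_nonneg (hMFnn _) (mul_nonneg (le_of_lt hc0) (hMLnn _))
  refine squeeze_zero (g := fun n => ρ ^ n * (MF t₀ + c * ML t₀))
    (fun n => hsupnn _) (fun n => ?_) ?_
  · calc (⨆ i ∈ L ∪ F, ‖x (n + t₀) i - g‖) ≤ MF (n + t₀) + c * ML (n + t₀) :=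
        hsuple _
      _ = MF (t₀ + n) + c * ML (t₀ + n) := by rw [Nat.add_comm]
      _ ≤ ρ ^ n * (MF t₀ + c * ML t₀) := hV n
  · have := (tendsto_pow_atTop_nhds_zero_of_lt_one hρ0 hρ1).mul_const
      (MF t₀ + c * ML t₀)
    simpa using this
end
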